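/- arXiv:math/0609694 — 2 statements merged into one kernel-verified Lean document; each statement's English description precedes it below -/
import Mathlib

section
/- Let ε : [0,∞) → ℝ be a continuous, nonnegative function that is integrable on [0,∞), and let c : [0,∞) → ℝ be differentiable with c'(t) = c(t) − ε(t) for all t ≥ 0 and with initial value c(0) = ∫₀^∞ ε(s) e^{−s} ds. Then for every t ≥ 0 one has 0 ≤ c(t) ≤ ∫₀^∞ ε(s) ds, and moreover c(t) → 0 as t → ∞. -/
open MeasureTheory Real Set Filter

/-- Analytic core of Lemma 4.6 (Chen–Tian normalization): if `c' = c - ε` on `[0,∞)`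
with `ε` continuous, nonnegative and integrable on `[0,∞)`, and
`c 0 = ∫₀^∞ ε s e^{-s} ds`, then `0 ≤ c t ≤ ∫₀^∞ ε` for all `t ≥ 0` and
`c t → 0` as `t → ∞`. -/
theorem flow_average_bounds_and_limit
    (ε c : ℝ → ℝ)
    (hε_cont : ContinuousOn ε (Ici 0))
    (hε_nonneg : ∀ t, 0 ≤ t → 0 ≤ ε t)
    (hε_int : IntegrableOn ε (Ici 0))
    (hc_ode : ∀ t, 0 ≤ t → HasDerivAt c (c t - ε t) t)
    (hc_init : c 0 = ∫ s in Ioi (0 : ℝ), ε s * Real.exp (-s)) :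
    (∀ t, 0 ≤ t → 0 ≤ c t ∧ c t ≤ ∫ s in Ioi (0 : ℝ), ε s) ∧
      Tendsto c atTop (nhds 0) := by
  set h : ℝ → ℝ := fun s => ε s * Real.exp (-s) with hh
  -- integrability of h on Ici 0
  have hh_cont : ContinuousOn h (Ici 0) :=
    hε_cont.mul ((Real.continuous_exp.comp continuous_neg).continuousOn)
  have hh_int : IntegrableOn h (Ici 0) := by
    refine hε_int.mono' (hh_cont.aestronglyMeasurable measurableSet_Ici) ?_
    filter_upwards [ae_restrict_mem measurableSet_Ici] with s hs
    have h1 : Real.exp (-s) ≤ 1 := Real.exp_le_one_iff.mpr (by linarith [mem_Ici.mp hs])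
    have h0 : 0 ≤ ε s := hε_nonneg s hs
    rw [Real.norm_eq_abs, abs_of_nonneg (mul_nonneg h0 (Real.exp_pos _).le)]
    calc ε s * Real.exp (-s) ≤ ε s * 1 := by
          exact mul_le_mul_of_nonneg_left h1 h0
      _ = ε s := mul_one _
  -- key identity : c t * exp (-t) = ∫ s in Ioi t, h s
  have key : ∀ t, 0 ≤ t → c t * Real.exp (-t) = ∫ s in Ioi t, h s := by
    intro t ht
    -- FTC on [0, t]
    have hderiv : ∀ s ∈ Set.uIcc 0 t,
        HasDerivAt (fun x => c x * Real.exp (-x)) (-h s) s := by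
      intro s hs
      rw [Set.uIcc_of_le ht] at hs
      have hcd := hc_ode s hs.1
      have hexp : HasDerivAt (fun x : ℝ => Real.exp (-x)) (Real.exp (-s) * (-1)) s :=
        (Real.hasDerivAt_exp (-s)).comp s ((hasDerivAt_id s).neg)
      have : HasDerivAt (fun x => c x * Real.exp (-x)) _ s := hcd.mul hexp
      convert this using 1
      show -(ε s * Real.exp (-s)) = _; ring
    have hcont : ContinuousOn (fun s => -h s) (Set.uIcc 0 t) := by
      rw [Set.uIcc_of_le ht]
      exact (hh_cont.mono (Icc_subset_Ici_self)).neg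
    have hftc := intervalIntegral.integral_eq_sub_of_hasDerivAt hderiv
      (hcont.intervalIntegrable)
    -- ∫ 0..t, -h = c t e^{-t} - c 0
    have hsplit : (∫ s in Ioi (0:ℝ), h s) = (∫ s in Ioc 0 t, h s) + ∫ s in Ioi t, h s := by
      rw [← setIntegral_union (Ioc_disjoint_Ioi le_rfl) measurableSet_Ioi
        (hh_int.mono_set (Ioc_subset_Icc_self.trans Icc_subset_Ici_self))
        (hh_int.mono_set (Ioi_subset_Ici ht)), Ioc_union_Ioi_eq_Ioi ht]
    have hII : (∫ s in (0:ℝ)..t, h s) = ∫ s in Ioc 0 t, h s :=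
      intervalIntegral.integral_of_le ht
    rw [intervalIntegral.integral_neg, hII] at hftc
    have : c t * Real.exp (-t) = c 0 - ∫ s in Ioc 0 t, h s := by
      simp only [neg_zero, Real.exp_zero, mul_one] at hftc
      linarith
    rw [this, hc_init, hsplit]; ring
  -- tail of ε
  have hε_int' : IntegrableOn ε (Ioi 0) := hε_int.mono_set Ioi_subset_Ici_self
  have hε_nonneg_ae : 0 ≤ᵐ[volume.restrict (Ioi (0:ℝ))] ε := by
    filter_upwards [ae_restrict_mem measurableSet_Ioi] with s hs
    exact hε_nonneg s (le_of_lt hs)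
  have tail_bound : ∀ t, 0 ≤ t → c t ≤ ∫ s in Ioi t, ε s := by
    intro t ht
    have h1 : (∫ s in Ioi t, h s) ≤ ∫ s in Ioi t, ε s * Real.exp (-t) := by
      refine setIntegral_mono_on (hh_int.mono_set (Ioi_subset_Ici ht))
        ((hε_int.mono_set (Ioi_subset_Ici ht)).mul_const _) measurableSet_Ioi ?_
      intro s hs
      exact mul_le_mul_of_nonneg_left (Real.exp_le_exp.mpr (by linarith [mem_Ioi.mp hs]))
        (hε_nonneg s (le_trans ht (le_of_lt hs)))
    have h2 : (∫ s in Ioi t, ε s * Real.exp (-t)) = (∫ s in Ioi t, ε s) * Real.exp (-t) := by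
      rw [integral_mul_const]
    have hkey := key t ht
    have hpos : (0:ℝ) < Real.exp (-t) := Real.exp_pos _
    nlinarith [hkey, h1, h2]
  have tail_nonneg : ∀ t, 0 ≤ t → 0 ≤ c t := by
    intro t ht
    have h0 : (0:ℝ) ≤ ∫ s in Ioi t, h s := by
      refine setIntegral_nonneg measurableSet_Ioi fun s hs => ?_
      exact mul_nonneg (hε_nonneg s (le_trans ht (le_of_lt hs))) (Real.exp_pos _).le
    have hkey := key t ht
    have hpos : (0:ℝ) < Real.exp (-t) := Real.exp_pos _
    nlinarith
  have tail_le_total : ∀ t, 0 ≤ t → (∫ s in Ioi t, ε s) ≤ ∫ s in Ioi (0:ℝ), ε s := by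
    intro t ht
    exact setIntegral_mono_set hε_int' hε_nonneg_ae
      (HasSubset.Subset.eventuallyLE (Ioi_subset_Ioi ht))
  refine ⟨fun t ht => ⟨tail_nonneg t ht, (tail_bound t ht).trans (tail_le_total t ht)⟩, ?_⟩
  -- limit
  have htend : Tendsto (fun t => ∫ s in Ioi t, ε s) atTop (nhds 0) := by
    have h1 : Tendsto (fun t => ∫ s in (0:ℝ)..t, ε s) atTop
        (nhds (∫ s in Ioi (0:ℝ), ε s)) :=
      intervalIntegral_tendsto_integral_Ioi 0 hε_int' tendsto_id
    have h2 : ∀ᶠ t in atTop, (∫ s in Ioi (0:ℝ), ε s) - (∫ s in (0:ℝ)..t, ε s)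
        = ∫ s in Ioi t, ε s := by
      filter_upwards [eventually_ge_atTop (0:ℝ)] with t ht
      have hsplit : (∫ s in Ioi (0:ℝ), ε s) = (∫ s in Ioc 0 t, ε s) + ∫ s in Ioi t, ε s := by
        rw [← setIntegral_union (Ioc_disjoint_Ioi le_rfl) measurableSet_Ioi
          (hε_int.mono_set (Ioc_subset_Icc_self.trans Icc_subset_Ici_self))
          (hε_int.mono_set (Ioi_subset_Ici ht)), Ioc_union_Ioi_eq_Ioi ht]
      rw [intervalIntegral.integral_of_le ht]
      linarith
    have h3 : Tendsto (fun t => (∫ s in Ioi (0:ℝ), ε s) - ∫ s in (0:ℝ)..t, ε s)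
        atTop (nhds 0) := by
      have := tendsto_const_nhds (x := ∫ s in Ioi (0:ℝ), ε s) (f := atTop (α := ℝ)) |>.sub h1
      simpa using this
    exact h3.congr' h2
  refine squeeze_zero' ?_ ?_ htend
  · filter_upwards [eventually_ge_atTop (0:ℝ)] with t ht using tail_nonneg t ht
  · filter_upwards [eventually_ge_atTop (0:ℝ)] with t ht using tail_bound t ht
end

section
/- Let ε : [0,∞) → ℝ be a continuous, nonnegative function that is integrable on [0,∞), and let c : [0,∞) → ℝ be differentiable with c'(t) = c(t) − ε(t) for all t ≥ 0 and with initial value c(0) = ∫₀^∞ ε(s) e^{−s} ds. Then c is integrable on [0,∞) and ∫₀^∞ c(t) dt = ∫₀^∞ ε(t) dt − c(0); in particular ∫₀^∞ c(t) dt ≤ ∫₀^∞ ε(t) dt. -/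
open MeasureTheory Real Set Filter Topology

/-- Analytic core of Lemma 4.6 (Chen–Tian normalization): if `c' = c - ε` on `[0,∞)`
with `ε` continuous, nonnegative and integrable on `[0,∞)`, and
`c 0 = ∫₀^∞ ε s e^{-s} ds`, then `c` is integrable on `[0,∞)` with
`∫₀^∞ c = ∫₀^∞ ε - c 0`; in particular `∫₀^∞ c ≤ ∫₀^∞ ε`. -/
theorem flow_average_integral
    (ε c : ℝ → ℝ)
    (hε_cont : ContinuousOn ε (Ici 0))
    (hε_nonneg : ∀ t, 0 ≤ t → 0 ≤ ε t)
    (hε_int : IntegrableOn ε (Ici 0))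
    (hc_ode : ∀ t, 0 ≤ t → HasDerivAt c (c t - ε t) t)
    (hc_init : c 0 = ∫ s in Ioi (0 : ℝ), ε s * Real.exp (-s)) :
    IntegrableOn c (Ici 0) ∧
      (∫ t in Ioi (0 : ℝ), c t) = (∫ t in Ioi (0 : ℝ), ε t) - c 0 ∧
      (∫ t in Ioi (0 : ℝ), c t) ≤ ∫ t in Ioi (0 : ℝ), ε t := by
  classical
  -- extend ε continuously to all of ℝ
  set εm : ℝ → ℝ := fun t => ε (max t 0) with hεm_def
  have hεm_cont : Continuous εm :=
    hε_cont.comp_continuous (continuous_id.max continuous_const) fun x => mem_Ici.2 (le_max_right _ _)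
  have hεm_eq : ∀ t, 0 ≤ t → εm t = ε t := fun t ht => by
    simp only [hεm_def, max_eq_left ht]
  have hεm_nonneg : ∀ t, 0 ≤ εm t := fun t => hε_nonneg _ (le_max_right _ _)
  have hεm_int : IntegrableOn εm (Ioi 0) := by
    refine (hε_int.mono_set Ioi_subset_Ici_self).congr_fun (fun t ht => ?_) measurableSet_Ioi
    exact (hεm_eq t (le_of_lt ht)).symm
  -- the weighted function f s = εm s * exp (-s)
  set f : ℝ → ℝ := fun s => εm s * Real.exp (-s) with hf_def
  have hf_cont : Continuous f := hεm_cont.mul (Real.continuous_exp.comp continuous_neg)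
  have hf_nonneg : ∀ s, 0 ≤ f s := fun s => mul_nonneg (hεm_nonneg s) (Real.exp_pos _).le
  have hf_le : ∀ s, 0 ≤ s → f s ≤ εm s := by
    intro s hs
    have h1 : Real.exp (-s) ≤ 1 := Real.exp_le_one_iff.2 (neg_nonpos.2 hs)
    calc f s = εm s * Real.exp (-s) := rfl
    _ ≤ εm s * 1 := mul_le_mul_of_nonneg_left h1 (hεm_nonneg s)
    _ = εm s := mul_one _
  have hf_int : IntegrableOn f (Ioi 0) := by
    refine hεm_int.mono' hf_cont.aestronglyMeasurable.restrict ?_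
    filter_upwards [ae_restrict_mem measurableSet_Ioi] with s hs
    rw [Real.norm_eq_abs, abs_of_nonneg (hf_nonneg s)]
    exact hf_le s hs.le
  -- splitting integrals over (0,∞) = (0,t] ∪ (t,∞)
  have hsplit : ∀ (g : ℝ → ℝ), IntegrableOn g (Ioi 0) → ∀ t : ℝ, 0 ≤ t →
      (∫ s in Ioi (0:ℝ), g s) = (∫ s in Ioc 0 t, g s) + ∫ s in Ioi t, g s := by
    intro g hg t ht
    rw [← setIntegral_union (Ioc_disjoint_Ioi le_rfl) measurableSet_Ioi
        (hg.mono_set Ioc_subset_Ioi_self)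
        (hg.mono_set (Ioi_subset_Ioi ht)), Ioc_union_Ioi_eq_Ioi ht]
  -- c is continuous on [0,∞)
  have hc_cont : ContinuousOn c (Ici 0) := fun t ht =>
    ((hc_ode t ht).continuousAt).continuousWithinAt
  -- the function H t = exp(-t) c t + ∫_0^t f is constant on [0,∞)
  set H : ℝ → ℝ := fun t => Real.exp (-t) * c t + ∫ s in (0:ℝ)..t, f s with hH_def
  have hH_deriv : ∀ t, 0 ≤ t → HasDerivAt H 0 t := by
    intro t ht
    have h1 : HasDerivAt (fun u => Real.exp (-u)) (-Real.exp (-t)) t := by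
      exact ((Real.hasDerivAt_exp (-t)).comp t (hasDerivAt_neg t)).congr_deriv (by simp)
    have h2 : HasDerivAt (fun u => Real.exp (-u) * c u)
        (-Real.exp (-t) * c t + Real.exp (-t) * (c t - ε t)) t := h1.mul (hc_ode t ht)
    have h3 : HasDerivAt (fun u => ∫ s in (0:ℝ)..u, f s) (f t) t :=
      intervalIntegral.integral_hasDerivAt_right (hf_cont.intervalIntegrable 0 t)
        (hf_cont.stronglyMeasurableAtFilter _ _) hf_cont.continuousAt
    have h4 := h2.add h3
    refine h4.congr_deriv ?_
    have h5 : f t = ε t * Real.exp (-t) := by rw [hf_def]; simp only; rw [hεm_eq t ht]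
    rw [h5]; ring
  have hH_const : ∀ t : ℝ, 0 ≤ t → H t = H 0 := by
    intro t ht
    have hcont : ContinuousOn H (Icc 0 t) := fun x hx =>
      ((hH_deriv x hx.1).continuousAt).continuousWithinAt
    exact constant_of_has_deriv_right_zero hcont
      (fun x hx => ((hH_deriv x hx.1).hasDerivWithinAt)) t (mem_Icc.2 ⟨ht, le_rfl⟩)
  have hH0 : H 0 = c 0 := by simp [hH_def]
  have hc0f : c 0 = ∫ s in Ioi (0:ℝ), f s := by
    rw [hc_init]
    refine setIntegral_congr_fun measurableSet_Ioi (fun s hs => ?_)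
    rw [hf_def]; simp only; rw [hεm_eq s hs.le]
  -- key representation : c t = exp t * ∫_{Ioi t} f
  have hkey : ∀ t : ℝ, 0 ≤ t → c t = Real.exp t * ∫ s in Ioi t, f s := by
    intro t ht
    have hct : Real.exp (-t) * c t + (∫ s in (0:ℝ)..t, f s) = c 0 :=
      (hH_const t ht).trans hH0
    rw [hc0f, hsplit f hf_int t ht, intervalIntegral.integral_of_le ht] at hct
    have h1 : Real.exp (-t) * c t = ∫ s in Ioi t, f s := by linarith
    have h2 : Real.exp t * (Real.exp (-t) * c t) = c t := by
      rw [← mul_assoc, ← Real.exp_add]; simp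
    rw [← h1, h2]
  have hc_nonneg : ∀ t, 0 ≤ t → 0 ≤ c t := by
    intro t ht
    rw [hkey t ht]
    exact mul_nonneg (Real.exp_pos t).le
      (setIntegral_nonneg measurableSet_Ioi fun s _ => hf_nonneg s)
  have htail_int : ∀ t : ℝ, 0 ≤ t → IntegrableOn εm (Ioi t) := fun t ht =>
    hεm_int.mono_set (Ioi_subset_Ioi ht)
  have hc_le_tail : ∀ t, 0 ≤ t → c t ≤ ∫ s in Ioi t, εm s := by
    intro t ht
    rw [hkey t ht, ← integral_const_mul]
    refine setIntegral_mono_on ((hf_int.mono_set (Ioi_subset_Ioi ht)).const_mul _)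
      (htail_int t ht) measurableSet_Ioi (fun s hs => ?_)
    have h1 : Real.exp t * Real.exp (-s) ≤ 1 := by
      rw [← Real.exp_add]
      exact Real.exp_le_one_iff.2 (by simp only [mem_Ioi] at hs; linarith)
    calc Real.exp t * (εm s * Real.exp (-s)) = εm s * (Real.exp t * Real.exp (-s)) := by ring
    _ ≤ εm s * 1 := mul_le_mul_of_nonneg_left h1 (hεm_nonneg s)
    _ = εm s := mul_one _
  -- the tail of the integral of εm tends to 0
  have htail0 : Tendsto (fun t => ∫ s in Ioi t, εm s) atTop (𝓝 0) := by
    have h1 : Tendsto (fun t : ℝ => ∫ s in (0:ℝ)..t, εm s) atTop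
        (𝓝 (∫ s in Ioi (0:ℝ), εm s)) :=
      intervalIntegral_tendsto_integral_Ioi 0 hεm_int tendsto_id
    have h2 := (tendsto_const_nhds (x := ∫ s in Ioi (0:ℝ), εm s)
      (f := atTop (α := ℝ))).sub h1
    rw [sub_self] at h2
    refine h2.congr' ?_
    filter_upwards [eventually_ge_atTop (0:ℝ)] with t ht
    rw [hsplit εm hεm_int t ht, intervalIntegral.integral_of_le ht]; ring
  have hc_to0 : Tendsto c atTop (𝓝 0) := by
    refine tendsto_of_tendsto_of_tendsto_of_le_of_le' tendsto_const_nhds htail0 ?_ ?_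
    · filter_upwards [eventually_ge_atTop (0:ℝ)] with t ht; exact hc_nonneg t ht
    · filter_upwards [eventually_ge_atTop (0:ℝ)] with t ht; exact hc_le_tail t ht
  -- FTC : ∫_0^T c = c T - c 0 + ∫_0^T εm
  have hFTC : ∀ T : ℝ, 0 ≤ T →
      (∫ t in (0:ℝ)..T, c t) = c T - c 0 + ∫ t in (0:ℝ)..T, εm t := by
    intro T hT
    have huIcc : uIcc (0:ℝ) T = Icc 0 T := uIcc_of_le hT
    have hsub : Icc (0:ℝ) T ⊆ Ici 0 := fun x hx => hx.1
    have hcc : ContinuousOn c (uIcc 0 T) := huIcc ▸ hc_cont.mono hsub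
    have hεc : ContinuousOn ε (uIcc 0 T) := huIcc ▸ hε_cont.mono hsub
    have h1 : (∫ t in (0:ℝ)..T, (c t - ε t)) = c T - c 0 :=
      intervalIntegral.integral_eq_sub_of_hasDerivAt
        (fun x hx => hc_ode x (by rw [huIcc] at hx; exact hx.1))
        ((hcc.sub hεc).intervalIntegrable)
    have h2 : (∫ t in (0:ℝ)..T, (c t - ε t)) =
        (∫ t in (0:ℝ)..T, c t) - ∫ t in (0:ℝ)..T, ε t :=
      intervalIntegral.integral_sub hcc.intervalIntegrable hεc.intervalIntegrable
    have h3 : (∫ t in (0:ℝ)..T, ε t) = ∫ t in (0:ℝ)..T, εm t :=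
      intervalIntegral.integral_congr fun x hx =>
        (hεm_eq x ((huIcc ▸ hx : x ∈ Icc (0:ℝ) T)).1).symm
    rw [h3] at h2
    linarith
  have hIε : (0:ℝ) ≤ ∫ s in Ioi (0:ℝ), εm s :=
    setIntegral_nonneg measurableSet_Ioi fun s _ => hεm_nonneg s
  have hεm_ae : (0 : ℝ → ℝ) ≤ᵐ[volume.restrict (Ioi (0:ℝ))] εm :=
    Eventually.of_forall hεm_nonneg
  have hbound : ∀ T : ℝ, 0 ≤ T →
      (∫ t in (0:ℝ)..T, c t) ≤ 2 * (∫ s in Ioi (0:ℝ), εm s) - c 0 := by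
    intro T hT
    rw [hFTC T hT]
    have h1 : c T ≤ ∫ s in Ioi (0:ℝ), εm s :=
      (hc_le_tail T hT).trans (setIntegral_mono_set hεm_int hεm_ae
        ((Ioi_subset_Ioi hT).eventuallyLE))
    have h2 : (∫ t in (0:ℝ)..T, εm t) ≤ ∫ s in Ioi (0:ℝ), εm s := by
      rw [intervalIntegral.integral_of_le hT]
      exact setIntegral_mono_set hεm_int hεm_ae (Ioc_subset_Ioi_self.eventuallyLE)
    linarith
  -- integrability of c
  have hc_intIoi : IntegrableOn c (Ioi 0) := by
    refine integrableOn_Ioi_of_intervalIntegral_norm_bounded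
      (2 * (∫ s in Ioi (0:ℝ), εm s) - c 0) 0 (fun T : ℝ => ?_) tendsto_id ?_
    · exact ((hc_cont.mono (fun x hx => hx.1 : Icc (0:ℝ) T ⊆ Ici 0)).integrableOn_Icc).mono_set
        Ioc_subset_Icc_self
    · filter_upwards [eventually_ge_atTop (0:ℝ)] with T hT
      have h1 : (∫ t in (0:ℝ)..T, ‖c t‖) = ∫ t in (0:ℝ)..T, c t := by
        refine intervalIntegral.integral_congr fun x hx => ?_
        rw [uIcc_of_le hT] at hx
        exact Real.norm_of_nonneg (hc_nonneg x hx.1)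
      simp only [id_eq]
      rw [h1]; exact hbound T hT
  have hc_intIci : IntegrableOn c (Ici 0) := by
    rwa [integrableOn_Ici_iff_integrableOn_Ioi]
  -- compute the integral
  have hεm_eq_int : (∫ t in Ioi (0:ℝ), εm t) = ∫ t in Ioi (0:ℝ), ε t :=
    setIntegral_congr_fun measurableSet_Ioi fun t ht => hεm_eq t ht.le
  have hlim1 : Tendsto (fun T => ∫ t in (0:ℝ)..T, c t) atTop
      (𝓝 (∫ t in Ioi (0:ℝ), c t)) :=
    intervalIntegral_tendsto_integral_Ioi 0 hc_intIoi tendsto_id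
  have hlim2 : Tendsto (fun T => ∫ t in (0:ℝ)..T, c t) atTop
      (𝓝 (0 - c 0 + ∫ t in Ioi (0:ℝ), εm t)) := by
    have h1 : Tendsto (fun T : ℝ => c T - c 0 + ∫ t in (0:ℝ)..T, εm t) atTop
        (𝓝 (0 - c 0 + ∫ t in Ioi (0:ℝ), εm t)) :=
      (hc_to0.sub tendsto_const_nhds).add
        (intervalIntegral_tendsto_integral_Ioi 0 hεm_int tendsto_id)
    refine Tendsto.congr' ?_ h1
    filter_upwards [eventually_ge_atTop (0:ℝ)] with T hT
    exact (hFTC T hT).symm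
  have hEq : (∫ t in Ioi (0:ℝ), c t) = (∫ t in Ioi (0:ℝ), ε t) - c 0 := by
    have h1 := tendsto_nhds_unique hlim1 hlim2
    rw [hεm_eq_int] at h1
    linarith
  have hc0_nonneg : 0 ≤ c 0 := by
    rw [hc0f]
    exact setIntegral_nonneg measurableSet_Ioi fun s _ => hf_nonneg s
  exact ⟨hc_intIci, hEq, by rw [hEq]; linarith⟩
end
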